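/- Let D be a connected locally semicomplete digraph in which no maximal weak hub is mixed, and let X, Y be two distinct maximal weak hubs. Then either X strictly in-dominates Y, or X strictly out-dominates Y, or there are no arcs between X and Y. -/

import Mathlib

/-- `A` is the arc relation of an oriented graph: no loops and no digons. -/
def IsOriented {V : Type*} (A : V → V → Prop) : Prop :=
  Irreflexive A ∧ ∀ x y, A x y → ¬ A y x

/-- `D` is strong: a directed path between each ordered pair of vertices. -/
def IsStrong {V : Type*} (A : V → V → Prop) : Prop :=
  ∀ x y : V, Relation.ReflTransGen A x y

/-- The set `S` induces a strong subdigraph (all paths staying inside `S`). -/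
def StrongOn {V : Type*} (A : V → V → Prop) (S : Set V) : Prop :=
  ∀ x ∈ S, ∀ y ∈ S, Relation.ReflTransGen (fun a b => a ∈ S ∧ b ∈ S ∧ A a b) x y

/-- The set `S` induces a tournament. -/
def TournamentOn {V : Type*} (A : V → V → Prop) (S : Set V) : Prop :=
  ∀ x ∈ S, ∀ y ∈ S, x ≠ y → A x y ∨ A y x

/-- The set `S` induces an acyclic digraph. -/
def AcyclicOn {V : Type*} (A : V → V → Prop) (S : Set V) : Prop :=
  ∀ x : V, ¬ Relation.TransGen (fun a b => a ∈ S ∧ b ∈ S ∧ A a b) x x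

/-- The set `S` induces a semicomplete digraph. -/
def SemicompleteOn {V : Type*} (A : V → V → Prop) (S : Set V) : Prop :=
  ∀ x ∈ S, ∀ y ∈ S, x ≠ y → A x y ∨ A y x

/-- `z` lies strictly inside the cyclic interval `]x,y[` for the cyclic order `σ`. -/
def CycBtw {V : Type*} [Fintype V] (σ : V ≃ Fin (Fintype.card V)) (x z y : V) : Prop :=
  0 < (σ z - σ x).val ∧ (σ z - σ x).val < (σ y - σ x).val

/-- In-round: a cyclic order such that for every arc `xy` and `z ∈ ]x,y[`, `zy` is an arc. -/
def InRound {V : Type*} [Fintype V] (A : V → V → Prop) : Prop :=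
  ∃ σ : V ≃ Fin (Fintype.card V), ∀ x y z : V, A x y → CycBtw σ x z y → A z y

/-- Out-round: a cyclic order such that for every arc `xy` and `z ∈ ]x,y[`, `xz` is an arc. -/
def OutRound {V : Type*} [Fintype V] (A : V → V → Prop) : Prop :=
  ∃ σ : V ≃ Fin (Fintype.card V), ∀ x y z : V, A x y → CycBtw σ x z y → A x z

/-- Every out-neighbourhood induces a transitive tournament. -/
def LocallyOutTransitive {V : Type*} (A : V → V → Prop) : Prop :=
  ∀ x : V, TournamentOn A {y | A x y} ∧ AcyclicOn A {y | A x y}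

/-- A hub: a nonempty set inducing a strong subdigraph, all of whose vertices are
in-neighbours of some vertex outside of it. -/
def Hub {V : Type*} (A : V → V → Prop) (H : Set V) : Prop :=
  H.Nonempty ∧ StrongOn A H ∧ ∃ x ∉ H, ∀ h ∈ H, A h x

/-- Locally semicomplete digraph: no loops, and every out- and in-neighbourhood
induces a semicomplete digraph (digons are allowed). -/
def LocallySemicomplete {V : Type*} (A : V → V → Prop) : Prop :=
  Irreflexive A ∧ (∀ x : V, SemicompleteOn A {y | A x y}) ∧
    ∀ x : V, SemicompleteOn A {y | A y x}

/-- The underlying undirected graph is connected. -/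
def ConnectedDigraph {V : Type*} (A : V → V → Prop) : Prop :=
  ∀ x y : V, Relation.ReflTransGen (fun a b => A a b ∨ A b a) x y

/-- A weak hub: a nonempty set inducing a strong subdigraph that is strictly
in-dominated or strictly out-dominated by some vertex outside of it. -/
def WeakHub {V : Type*} (A : V → V → Prop) (X : Set V) : Prop :=
  X.Nonempty ∧ StrongOn A X ∧
    ∃ x ∉ X, (∀ u ∈ X, A u x ∧ ¬ A x u) ∨ ∀ u ∈ X, A x u ∧ ¬ A u x

/-- A set `X` is mixed if some outside vertex has both an out-neighbour and an
in-neighbour in `X`. -/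
def MixedSet {V : Type*} (A : V → V → Prop) (X : Set V) : Prop :=
  ∃ x ∉ X, (∃ u ∈ X, A x u) ∧ ∃ v ∈ X, A v x

/-- `X` is an inclusion-wise maximal weak hub. -/
def MaxWeakHub {V : Type*} (A : V → V → Prop) (X : Set V) : Prop :=
  WeakHub A X ∧ ∀ Y : Set V, WeakHub A Y → X ⊆ Y → Y = X

/-!
In a locally semicomplete digraph, a vertex outside a strong non-mixed set `X` that has an arc to
(from) some vertex of `X` has, walking along paths of `X`, an arc to (from) every vertex of `X` and
none back. Hence distinct maximal weak hubs are disjoint: a dominator of `Y` outside `X` dominates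
`X` as well, making `X ∪ Y` a larger weak hub, while a dominator of `Y` inside `X` is contradicted
by an arc of `Y` entering or leaving `X`. For disjoint `X` and `Y`, a single arc `y₁ → x₁` spreads
in two steps: every `y ∈ Y` sends an arc to `x₁`, so every `y ∈ Y` sends arcs to all of `X`.
-/

theorem Relation.ReflTransGen.exists_rel_leaving {α : Type*} {r : α → α → Prop} (p : α → Prop)
    {a b : α} (hab : Relation.ReflTransGen r a b) (ha : p a) (hb : ¬ p b) :
    ∃ u v, p u ∧ ¬ p v ∧ r u v := by
  induction hab with
  | refl => exact absurd ha hb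
  | @tail c d _ hcd ih =>
    by_cases hc : p c
    · exact ⟨c, d, hc, hb, hcd⟩
    · exact ih hc

section

variable {V : Type*} {A : V → V → Prop} {X Y : Set V}

theorem StrongOn.union (hX : StrongOn A X) (hY : StrongOn A Y) {v : V} (hvX : v ∈ X)
    (hvY : v ∈ Y) : StrongOn A (X ∪ Y) := by
  have lift : ∀ {S : Set V}, S ⊆ X ∪ Y → ∀ {a b : V},
      Relation.ReflTransGen (fun a b => a ∈ S ∧ b ∈ S ∧ A a b) a b →
      Relation.ReflTransGen (fun a b => a ∈ X ∪ Y ∧ b ∈ X ∪ Y ∧ A a b) a b :=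
    fun hS _ _ => Relation.ReflTransGen.mono (fun _ _ h => ⟨hS h.1, hS h.2.1, h.2.2⟩) _ _
  have to_v : ∀ x ∈ X ∪ Y, Relation.ReflTransGen
      (fun a b => a ∈ X ∪ Y ∧ b ∈ X ∪ Y ∧ A a b) x v := by
    rintro x (hx | hx)
    · exact lift Set.subset_union_left (hX x hx v hvX)
    · exact lift Set.subset_union_right (hY x hx v hvY)
  have from_v : ∀ y ∈ X ∪ Y, Relation.ReflTransGen
      (fun a b => a ∈ X ∪ Y ∧ b ∈ X ∪ Y ∧ A a b) v y := by
    rintro y (hy | hy)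
    · exact lift Set.subset_union_left (hX v hvX y hy)
    · exact lift Set.subset_union_right (hY v hvY y hy)
  exact fun x hx y hy => (to_v x hx).trans (from_v y hy)

theorem MaxWeakHub.eq_of_weakHub_union (hX : MaxWeakHub A X) (hY : MaxWeakHub A Y)
    (hXY : WeakHub A (X ∪ Y)) : X = Y :=
  (hX.2 _ hXY Set.subset_union_left).symm.trans (hY.2 _ hXY Set.subset_union_right)

namespace LocallySemicomplete

/-- Walking backwards from `u` inside `X`: an arc `a → b` of `X` with `z → b` makes `a` and `z`
adjacent in-neighbours of `b`, and `a → z` would make `X` mixed, so `z → a`. -/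
theorem strictOutDom_of_arc (hls : LocallySemicomplete A) (hXs : StrongOn A X)
    (hnm : ¬ MixedSet A X) {z u : V} (hz : z ∉ X) (hu : u ∈ X) (hzu : A z u) :
    ∀ w ∈ X, A z w ∧ ¬ A w z := by
  have to_u : ∀ w, Relation.ReflTransGen (fun a b => a ∈ X ∧ b ∈ X ∧ A a b) w u → A z w := by
    intro w hwu
    induction hwu using Relation.ReflTransGen.head_induction_on with
    | refl => exact hzu
    | head hab _ ih =>
      obtain ⟨ha, -, hab⟩ := hab
      rcases hls.2.2 _ z ih _ hab (by rintro rfl; exact hz ha) with h | h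
      · exact h
      · exact absurd ⟨z, hz, ⟨u, hu, hzu⟩, ⟨_, ha, h⟩⟩ hnm
  exact fun w hw => ⟨to_u w (hXs w hw u hu), fun h => hnm ⟨z, hz, ⟨u, hu, hzu⟩, ⟨w, hw, h⟩⟩⟩

theorem strictInDom_of_arc (hls : LocallySemicomplete A) (hXs : StrongOn A X)
    (hnm : ¬ MixedSet A X) {z u : V} (hz : z ∉ X) (hu : u ∈ X) (huz : A u z) :
    ∀ w ∈ X, A w z ∧ ¬ A z w := by
  have from_u : ∀ w, Relation.ReflTransGen (fun a b => a ∈ X ∧ b ∈ X ∧ A a b) u w → A w z := by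
    intro w huw
    induction huw with
    | refl => exact huz
    | @tail c d _ hcd ih =>
      obtain ⟨-, hd, hcd⟩ := hcd
      rcases hls.2.1 c _ hcd z ih (by rintro rfl; exact hz hd) with h | h
      · exact h
      · exact absurd ⟨z, hz, ⟨d, hd, h⟩, ⟨u, hu, huz⟩⟩ hnm
  exact fun w hw => ⟨from_u w (hXs u hu w hw), fun h => hnm ⟨z, hz, ⟨w, hw, h⟩, ⟨u, hu, huz⟩⟩⟩

theorem strictOutDom_of_disjoint_of_arc (hls : LocallySemicomplete A) (hXs : StrongOn A X)
    (hYs : StrongOn A Y) (hnmX : ¬ MixedSet A X) (hnmY : ¬ MixedSet A Y) (hXY : Disjoint X Y)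
    {x₁ y₁ : V} (hx₁ : x₁ ∈ X) (hy₁ : y₁ ∈ Y) (hyx : A y₁ x₁) :
    ∀ x ∈ X, ∀ y ∈ Y, A y x ∧ ¬ A x y := by
  have hx₁Y := hls.strictInDom_of_arc hYs hnmY (hXY.notMem_of_mem_left hx₁) hy₁ hyx
  exact fun x hx y hy =>
    hls.strictOutDom_of_arc hXs hnmX (hXY.notMem_of_mem_right hy) hx₁ (hx₁Y y hy).1 x hx

end LocallySemicomplete

theorem MaxWeakHub.disjoint (hls : LocallySemicomplete A) (hX : MaxWeakHub A X)
    (hY : MaxWeakHub A Y) (hnm : ¬ MixedSet A X) (hne : X ≠ Y) : Disjoint X Y := by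
  refine Set.disjoint_left.mpr fun v hvX hvY => ?_
  obtain ⟨-, hYs, z, hzY, hz⟩ := hY.1
  by_cases hzX : z ∈ X
  · obtain ⟨a, haY, haX⟩ : (Y \ X).Nonempty :=
      Set.sdiff_nonempty.mpr fun hYX => hne (hY.2 X hX.1 hYX)
    rcases hz with hz | hz
    · obtain ⟨w, u, hw, hu, hwu⟩ := (hYs v hvY a haY).exists_rel_leaving (· ∈ X) hvX haX
      exact (hls.strictInDom_of_arc hX.1.2.1 hnm hu hw hwu.2.2 z hzX).2 (hz u hwu.2.1).1
    · obtain ⟨u, w, hu, hw, huw⟩ :=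
        (hYs a haY v hvY).exists_rel_leaving (· ∉ X) haX (not_not_intro hvX)
      exact (hls.strictOutDom_of_arc hX.1.2.1 hnm hu (not_not.mp hw) huw.2.2 z hzX).2
        (hz u huw.1).1
  · refine hne (hX.eq_of_weakHub_union hY ⟨⟨v, .inl hvX⟩, hX.1.2.1.union hYs hvX hvY, z,
      fun h => h.elim hzX hzY, ?_⟩)
    rcases hz with hz | hz
    · exact .inl fun u hu =>
        hu.elim (hls.strictInDom_of_arc hX.1.2.1 hnm hzX hvX (hz v hvY).1 u) (hz u)
    · exact .inr fun u hu =>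
        hu.elim (hls.strictOutDom_of_arc hX.1.2.1 hnm hzX hvX (hz v hvY).1 u) (hz u)

end

theorem stmt16_general {V : Type*} (A : V → V → Prop)
    (hls : LocallySemicomplete A)
    (hnomix : ∀ Z : Set V, MaxWeakHub A Z → ¬ MixedSet A Z)
    (X Y : Set V) (hX : MaxWeakHub A X) (hY : MaxWeakHub A Y) (hne : X ≠ Y) :
    (∀ x ∈ X, ∀ y ∈ Y, A y x ∧ ¬ A x y) ∨
    (∀ x ∈ X, ∀ y ∈ Y, A x y ∧ ¬ A y x) ∨
    (∀ x ∈ X, ∀ y ∈ Y, ¬ A x y ∧ ¬ A y x) := by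
  have hdisj := hX.disjoint hls hY (hnomix X hX) hne
  have hXs := hX.1.2.1
  have hYs := hY.1.2.1
  by_cases hYXarc : ∃ y₁ ∈ Y, ∃ x₁ ∈ X, A y₁ x₁
  · obtain ⟨y₁, hy₁, x₁, hx₁, hyx⟩ := hYXarc
    exact .inl <| hls.strictOutDom_of_disjoint_of_arc hXs hYs (hnomix X hX) (hnomix Y hY) hdisj
      hx₁ hy₁ hyx
  by_cases hXYarc : ∃ x₁ ∈ X, ∃ y₁ ∈ Y, A x₁ y₁
  · obtain ⟨x₁, hx₁, y₁, hy₁, hxy⟩ := hXYarc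
    have h := hls.strictOutDom_of_disjoint_of_arc hYs hXs (hnomix Y hY) (hnomix X hX) hdisj.symm
      hy₁ hx₁ hxy
    exact .inr <| .inl fun x hx y hy => h y hy x hx
  exact .inr <| .inr fun x hx y hy =>
    ⟨fun h => hXYarc ⟨x, hx, y, hy, h⟩, fun h => hYXarc ⟨y, hy, x, hx, h⟩⟩

theorem stmt16 {V : Type*} [Fintype V] (A : V → V → Prop)
    (hls : LocallySemicomplete A) (hconn : ConnectedDigraph A)
    (hnomix : ∀ Z : Set V, MaxWeakHub A Z → ¬ MixedSet A Z)
    (X Y : Set V) (hX : MaxWeakHub A X) (hY : MaxWeakHub A Y) (hne : X ≠ Y) :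
    (∀ x ∈ X, ∀ y ∈ Y, A y x ∧ ¬ A x y) ∨
    (∀ x ∈ X, ∀ y ∈ Y, A x y ∧ ¬ A y x) ∨
    (∀ x ∈ X, ∀ y ∈ Y, ¬ A x y ∧ ¬ A y x) :=
  stmt16_general A hls hnomix X Y hX hY hne
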